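/- Let n ≥ 1 be an integer, α, β real numbers, and let f : ℝ → ℝ be defined by f(x) = P_n^{(α,β)}(2x²-1). Then for every real x ≠ 0, f''(x) + ((2β+1)/x) f'(x) = 4(n+α+β+1)(n+β) · P_{n-1}^{(α+2,β)}(2x²-1). -/

import Mathlib

open MeasureTheory Finset

/-- Rising factorial (Pochhammer symbol) `(a)_k = a(a+1)⋯(a+k-1)`. -/
noncomputable def poch (a : ℝ) (k : ℕ) : ℝ := ∏ i ∈ Finset.range k, (a + i)

/-- Jacobi polynomial
`P_n^{(α,β)}(x) = Σ_{k=0}^n ((α+k+1)_{n-k}/(n-k)!) ((n+α+β+1)_k/k!) ((x-1)/2)^k`. -/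
noncomputable def jacobiP (n : ℕ) (α β : ℝ) (x : ℝ) : ℝ :=
  ∑ k ∈ Finset.range (n + 1),
    poch (α + k + 1) (n - k) / ((n - k).factorial : ℝ) *
      (poch ((n : ℝ) + α + β + 1) k / (k.factorial : ℝ)) * ((x - 1) / 2) ^ k

/-! With `p` the polynomial such that `P_n^{(α,β)}(x) = p((x-1)/2)`, we have `f(x) = p(x²-1)`,
and the chain rule turns `f'' + (2β+1)/x · f'` into `4((s+1)p''(s) + (β+1)p'(s))` at `s = x²-1`.
Comparing coefficients, this operator maps `p` to `(n+α+β+1)(n+β)` times the polynomial of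
`P_{n-1}^{(α+2,β)}`: a two-term identity between the Pochhammer coefficients. -/

open Polynomial

lemma poch_zero (a : ℝ) : poch a 0 = 1 := prod_range_zero _

lemma poch_succ_right (a : ℝ) (m : ℕ) : poch a (m + 1) = poch a m * (a + m) :=
  prod_range_succ _ _

lemma poch_succ_left (a : ℝ) (m : ℕ) : poch a (m + 1) = a * poch (a + 1) m := by
  simp only [poch, prod_range_succ', Nat.cast_zero, add_zero, Nat.cast_succ, add_assoc,
    add_comm (1 : ℝ), mul_comm]

noncomputable def jacobiCoeff (n : ℕ) (α β : ℝ) (k : ℕ) : ℝ :=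
  poch (α + k + 1) (n - k) / ((n - k).factorial : ℝ) *
    (poch ((n : ℝ) + α + β + 1) k / (k.factorial : ℝ))

noncomputable def jacobiPoly (n : ℕ) (α β : ℝ) : ℝ[X] :=
  ∑ k ∈ range (n + 1), C (jacobiCoeff n α β k) * X ^ k

lemma jacobiP_eq_eval (n : ℕ) (α β x : ℝ) :
    jacobiP n α β x = (jacobiPoly n α β).eval ((x - 1) / 2) := by
  simp [jacobiP, jacobiPoly, eval_finsetSum, jacobiCoeff]

lemma coeff_jacobiPoly (n : ℕ) (α β : ℝ) (k : ℕ) :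
    (jacobiPoly n α β).coeff k = if k ≤ n then jacobiCoeff n α β k else 0 := by
  simp [jacobiPoly]

lemma coeff_X_mul_derivative {R : Type*} [Semiring R] (p : R[X]) (j : ℕ) :
    (X * derivative p).coeff j = p.coeff j * j := by
  cases j with
  | zero => simp
  | succ j => simp [coeff_X_mul, coeff_derivative]

lemma jacobiCoeff_recurrence (n : ℕ) (α β : ℝ) {j : ℕ} (hj : j < n) :
    ((j : ℝ) + 1) * (j + β + 1) * jacobiCoeff (n + 1) α β (j + 1)
      + ((j : ℝ) + 2) * (j + 1) * jacobiCoeff (n + 1) α β (j + 2)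
      = ((n : ℝ) + α + β + 2) * (n + β + 1) * jacobiCoeff n (α + 2) β j := by
  obtain ⟨m, rfl⟩ := Nat.exists_eq_add_of_lt hj
  simp only [jacobiCoeff, show j + m + 1 + 1 - (j + 1) = m + 1 by omega,
    show j + m + 1 + 1 - (j + 2) = m by omega, show j + m + 1 - j = m + 1 by omega]
  -- every Pochhammer factor is a polynomial multiple of `(α+j+3)_m` or of `(j+m+α+β+4)_j`
  have hA₁ : poch (α + ↑(j + 1) + 1) (m + 1) = (α + j + 2) * poch (α + j + 3) m := by
    rw [poch_succ_left]; push_cast; ring_nf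
  have hA₂ : poch (α + ↑(j + 2) + 1) m = poch (α + j + 3) m := by push_cast; ring_nf
  have hA₃ : poch (α + 2 + j + 1) (m + 1) = poch (α + j + 3) m * (α + j + m + 3) := by
    rw [poch_succ_right]; ring_nf
  have hB₁ : poch (↑(j + m + 1 + 1) + α + β + 1) (j + 1) =
      (j + m + α + β + 3) * poch (j + m + α + β + 4) j := by
    rw [poch_succ_left]; push_cast; ring_nf
  have hB₂ : poch (↑(j + m + 1 + 1) + α + β + 1) (j + 2) =
      (j + m + α + β + 3) * poch (j + m + α + β + 4) j * (2 * j + m + α + β + 4) := by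
    rw [poch_succ_left, poch_succ_right]; push_cast; ring_nf
  have hB₃ : poch (↑(j + m + 1) + (α + 2) + β + 1) j = poch (j + m + α + β + 4) j := by
    push_cast; ring_nf
  rw [hA₁, hA₂, hA₃, hB₁, hB₂, hB₃]
  simp only [Nat.factorial_succ]
  push_cast
  field_simp
  ring

lemma jacobiCoeff_recurrence_top (n : ℕ) (α β : ℝ) :
    ((n : ℝ) + 1) * (n + β + 1) * jacobiCoeff (n + 1) α β (n + 1)
      = ((n : ℝ) + α + β + 2) * (n + β + 1) * jacobiCoeff n (α + 2) β n := by
  have hB : poch (↑(n + 1) + α + β + 1) (n + 1) =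
      (n + α + β + 2) * poch (↑n + (α + 2) + β + 1) n := by
    rw [poch_succ_left]; push_cast; ring_nf
  simp only [jacobiCoeff, Nat.sub_self, poch_zero, Nat.factorial_zero, hB,
    Nat.factorial_succ]
  push_cast
  field_simp

lemma jacobiPoly_succ_ode (n : ℕ) (α β : ℝ) :
    (X + 1) * derivative (derivative (jacobiPoly (n + 1) α β))
      + C (β + 1) * derivative (jacobiPoly (n + 1) α β)
      = C (((n : ℝ) + α + β + 2) * (n + β + 1)) * jacobiPoly n (α + 2) β := by
  ext j
  simp only [add_mul, one_mul, coeff_add, coeff_X_mul_derivative, coeff_C_mul, coeff_derivative,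
    coeff_jacobiPoly]
  rcases lt_trichotomy j n with hj | rfl | hj
  · rw [if_pos (by omega), if_pos (by omega), if_pos hj.le]
    push_cast
    linear_combination jacobiCoeff_recurrence n α β hj
  · rw [if_pos le_rfl, if_neg (by omega), if_pos le_rfl]
    push_cast
    linear_combination jacobiCoeff_recurrence_top j α β
  · rw [if_neg (by omega), if_neg (by omega), if_neg (by omega)]
    simp

lemma hasDerivAt_eval_sq_sub_one (p : ℝ[X]) (x : ℝ) :
    HasDerivAt (fun y => p.eval (y ^ 2 - 1)) (p.derivative.eval (x ^ 2 - 1) * (2 * x)) x := by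
  have hsq : HasDerivAt (fun y : ℝ => y ^ 2 - 1) (2 * x) x := by
    simpa using (hasDerivAt_pow 2 x).sub_const 1
  exact (p.hasDerivAt (x ^ 2 - 1)).comp x hsq

lemma radial_operator_eval_sq_sub_one (p : ℝ[X]) (β : ℝ) {x : ℝ} (hx : x ≠ 0) :
    deriv (deriv fun y => p.eval (y ^ 2 - 1)) x
        + (2 * β + 1) / x * deriv (fun y => p.eval (y ^ 2 - 1)) x
      = 4 * ((X + 1) * derivative (derivative p) + C (β + 1) * derivative p).eval (x ^ 2 - 1) := by
  have hd : deriv (fun y => p.eval (y ^ 2 - 1)) =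
      fun y => p.derivative.eval (y ^ 2 - 1) * (2 * y) :=
    funext fun y => (hasDerivAt_eval_sq_sub_one p y).deriv
  have hdd := ((hasDerivAt_eval_sq_sub_one p.derivative x).fun_mul
    (hasDerivAt_const_mul 2)).deriv
  rw [hd, hdd]
  simp only [eval_add, eval_mul, eval_X, eval_one, eval_C]
  field_simp
  ring

theorem jacobi_dunkl_squared (n : ℕ) (hn : 1 ≤ n) (α β : ℝ)
    (f : ℝ → ℝ) (hf : ∀ x, f x = jacobiP n α β (2 * x ^ 2 - 1)) (x : ℝ) (hx : x ≠ 0) :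
    deriv (deriv f) x + (2 * β + 1) / x * deriv f x =
      4 * ((n : ℝ) + α + β + 1) * ((n : ℝ) + β) *
        jacobiP (n - 1) (α + 2) β (2 * x ^ 2 - 1) := by
  obtain ⟨m, rfl⟩ := Nat.exists_eq_add_of_le' hn
  have hs : ∀ y : ℝ, (2 * y ^ 2 - 1 - 1) / 2 = y ^ 2 - 1 := fun y => by ring
  have hf' : f = fun y => (jacobiPoly (m + 1) α β).eval (y ^ 2 - 1) :=
    funext fun y => by rw [hf, jacobiP_eq_eval, hs]
  rw [hf', radial_operator_eval_sq_sub_one _ _ hx, jacobiPoly_succ_ode, eval_C_mul,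
    Nat.add_sub_cancel, jacobiP_eq_eval, hs]
  push_cast
  ring
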